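/- The set C = {ab} ∪ {a bⁿ a bⁿ⁺¹ : n ≥ 1} over the alphabet {a,b} is not a strong code: the bi-infinite sequence ⋯(ab)(ab)·(ab²)(ab³)(ab⁴)⋯ admits two distinct factorizations into words of C (up to shift). -/

import Mathlib

inductive AB : Type | a | b
deriving DecidableEq

open AB

/-- A factorization (with phase `k`) of the bi-infinite sequence `x` into words
of `C`: there are positions `p n` with `p 0 = -k`, `0 ≤ k < |c 0|`, each block
`c n` occupying positions `p n, …, p (n+1) - 1` of `x`. -/
def IsBiFactorization (C : Set (List AB)) (x : ℤ → AB)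
    (c : ℤ → List AB) (k : ℕ) : Prop :=
  (∀ n, c n ∈ C) ∧ k < (c 0).length ∧
  ∃ p : ℤ → ℤ, p 0 = -(k : ℤ) ∧ (∀ n, p (n + 1) = p n + (c n).length) ∧
    ∀ (n : ℤ) (i : Fin (c n).length), x (p n + (i : ℕ)) = (c n).get i

/-- `C` is a strong code: every bi-infinite sequence admits at most one
factorization (with phase) into words of `C`. -/
def IsStrongCode (C : Set (List AB)) : Prop :=
  ∀ (x : ℤ → AB) (c c' : ℤ → List AB) (k k' : ℕ),
    IsBiFactorization C x c k → IsBiFactorization C x c' k' → c = c' ∧ k = k'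

/-- The code `{ab} ∪ {a bⁿ a bⁿ⁺¹ : n ≥ 1}`. -/
def C : Set (List AB) :=
  {w | w = [a, b] ∨ ∃ n : ℕ, 1 ≤ n ∧
    w = a :: (List.replicate n b ++ a :: List.replicate (n + 1) b)}

open Classical in
/-- The bi-infinite sequence `⋯(ab)(ab)·(ab²)(ab³)(ab⁴)⋯` : on the left a
periodic `ab` pattern, on the right the concatenation `ab²ab³ab⁴⋯`, whose
letters `a` occur exactly at the positions `m(m+1)/2 - 3` for `m ≥ 2`. -/
noncomputable def xword : ℤ → AB := fun n =>
  if n < 0 then (if Even n then a else b)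
  else (if ∃ m : ℕ, 2 ≤ m ∧ n = (↑(m * (m + 1) / 2) : ℤ) - 3 then a else b)

/-!
The letters `a` of `xword` on the right half-line sit at the positions `T m - 3`, where
`T m = m(m+1)/2` and `m ≥ 2`, so `xword` reads `a bᵐ` at position `T m - 3` for every `m ≥ 1`
(for `m = 1` this is an `ab` of the periodic left half). Grouping these words in pairs, the
sequence reads `(ab ab²)(ab³ ab⁴)⋯` from position `-2` on and `(ab² ab³)(ab⁴ ab⁵)⋯` from
position `0` on. Preceded by the `ab`s of the left half, these are two factorizations into
words of `C` with different phases.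
-/

section OccursAt

variable {α : Type*}

def OccursAt (x : ℤ → α) (w : List α) (p : ℤ) : Prop :=
  ∀ i (hi : i < w.length), x (p + i) = w[i]

theorem OccursAt.append {x : ℤ → α} {u v : List α} {p : ℤ} (hu : OccursAt x u p)
    (hv : OccursAt x v (p + u.length)) : OccursAt x (u ++ v) p := by
  intro i hi
  rcases lt_or_ge i u.length with h | h
  · rw [List.getElem_append_left h, hu i h]
  · rw [List.getElem_append_right h, ← hv (i - u.length) (by simp at hi; omega)]
    congr 1
    omega

theorem occursAt_cons_replicate {x : ℤ → α} {p : ℤ} {a b : α} {m : ℕ} (ha : x p = a)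
    (hb : ∀ i : ℕ, 1 ≤ i → i ≤ m → x (p + i) = b) :
    OccursAt x (a :: List.replicate m b) p := by
  rintro (_ | i) hi
  · simpa using ha
  · simp only [List.length_cons, List.length_replicate] at hi
    simpa using hb (i + 1) (by omega) (by omega)

end OccursAt

def tri (m : ℕ) : ℕ := m * (m + 1) / 2

theorem tri_succ (m : ℕ) : tri (m + 1) = tri m + (m + 1) := by
  have h : (m + 1) * (m + 1 + 1) = m * (m + 1) + 2 * (m + 1) := by ring
  simp only [tri]
  omega

theorem tri_strictMono : StrictMono tri :=
  strictMono_nat_of_lt_succ fun m => by rw [tri_succ]; omega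

def abPow (m : ℕ) : List AB := a :: List.replicate m b

theorem abPow_length (m : ℕ) : (abPow m).length = m + 1 := by
  simp [abPow]

theorem abPow_one_mem_C : abPow 1 ∈ C := Or.inl rfl

theorem abPow_append_abPow_succ_mem_C {n : ℕ} (hn : 1 ≤ n) : abPow n ++ abPow (n + 1) ∈ C :=
  Or.inr ⟨n, hn, rfl⟩

theorem xword_tri_sub_three {m : ℕ} (hm : 2 ≤ m) : xword ((tri m : ℤ) - 3) = a := by
  have h3 : 3 ≤ tri m := tri_strictMono.monotone hm
  rw [xword, if_neg (by omega), if_pos ⟨m, hm, rfl⟩]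

theorem xword_eq_b_of_tri_lt {q : ℤ} {m : ℕ} (hq : 0 ≤ q) (h1 : (tri m : ℤ) < q + 3)
    (h2 : q + 3 < tri (m + 1)) : xword q = b := by
  rw [xword, if_neg (by omega), if_neg]
  rintro ⟨n, -, hqn⟩
  have hqn : q = (tri n : ℤ) - 3 := hqn
  have hmn : m < n := tri_strictMono.lt_iff_lt.mp (by omega)
  have hnm : n < m + 1 := tri_strictMono.lt_iff_lt.mp (by omega)
  omega

theorem xword_occursAt_abPow_one {q : ℤ} (hq : q < 0) : OccursAt xword (abPow 1) (2 * q) := by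
  refine occursAt_cons_replicate ?_ fun i hi1 hi2 => ?_
  · rw [xword, if_pos (by omega), if_pos (even_two_mul q)]
  · obtain rfl : i = 1 := by omega
    rw [xword, if_pos (by omega), if_neg (by simp)]

theorem xword_occursAt_abPow {m : ℕ} (hm : 1 ≤ m) : OccursAt xword (abPow m) ((tri m : ℤ) - 3) := by
  obtain rfl | hm := eq_or_lt_of_le hm
  · simpa [tri] using xword_occursAt_abPow_one (q := -1) (by norm_num)
  have h3 : 3 ≤ tri m := tri_strictMono.monotone hm
  refine occursAt_cons_replicate (xword_tri_sub_three hm) fun i hi1 hi2 => ?_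
  have := tri_succ m
  exact xword_eq_b_of_tri_lt (m := m) (by omega) (by omega) (by omega)

theorem xword_occursAt_abPow_append_abPow_succ {n : ℕ} (hn : 1 ≤ n) :
    OccursAt xword (abPow n ++ abPow (n + 1)) ((tri n : ℤ) - 3) := by
  refine (xword_occursAt_abPow hn).append ?_
  have h : (tri n : ℤ) - 3 + (abPow n).length = (tri (n + 1) : ℤ) - 3 := by
    rw [abPow_length, tri_succ]; push_cast; ring
  exact h ▸ xword_occursAt_abPow (by omega)

def blocks (r : ℕ) (j : ℤ) : List AB :=
  if j < 0 then abPow 1 else abPow (2 * j.toNat + r) ++ abPow (2 * j.toNat + r + 1)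

def blockStart (r : ℕ) (j : ℤ) : ℤ :=
  if j < 0 then 2 * j + tri r - 3 else tri (2 * j.toNat + r) - 3

theorem blockStart_succ {r : ℕ} (j : ℤ) :
    blockStart r (j + 1) = blockStart r j + (blocks r j).length := by
  by_cases hj : j < 0
  · simp only [blockStart, blocks, hj, ↓reduceIte, abPow_length]
    by_cases hj1 : j + 1 < 0
    · simp only [hj1, ↓reduceIte]; push_cast; ring
    · obtain rfl : j = -1 := by omega
      simp only [neg_add_cancel, lt_self_iff_false, ↓reduceIte, Int.toNat_zero, mul_zero,
        zero_add]
      push_cast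
      ring
  · simp only [blockStart, blocks, hj, ↓reduceIte, show ¬ j + 1 < 0 by omega,
      List.length_append, abPow_length, show (j + 1).toNat = j.toNat + 1 by omega,
      show 2 * (j.toNat + 1) + r = 2 * j.toNat + r + 1 + 1 by ring, tri_succ]
    push_cast
    ring

theorem isBiFactorization_blocks {r : ℕ} (hr : r = 1 ∨ r = 2) :
    IsBiFactorization C xword (blocks r) (3 - tri r) := by
  have htri : tri r ≤ 3 ∧ ∃ e : ℤ, (tri r : ℤ) - 3 = 2 * e ∧ e ≤ 0 := by
    rcases hr with rfl | rfl
    · exact ⟨by decide, -1, by decide, by decide⟩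
    · exact ⟨by decide, 0, by decide, le_rfl⟩
  obtain ⟨hle, e, he, he0⟩ := htri
  refine ⟨fun j => ?_, ?_, blockStart r, ?_, blockStart_succ, fun j i => ?_⟩
  · unfold blocks
    split_ifs
    · exact abPow_one_mem_C
    · exact abPow_append_abPow_succ_mem_C (by omega)
  · simp only [blocks, lt_irrefl, if_false, List.length_append, abPow_length]
    omega
  · simp only [blockStart, lt_irrefl, if_false, Int.toNat_zero, mul_zero, zero_add]
    omega
  · rw [List.get_eq_getElem]
    unfold blocks blockStart
    split_ifs with hj
    · rw [show 2 * j + (tri r : ℤ) - 3 = 2 * (j + e) by omega]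
      exact xword_occursAt_abPow_one (by omega) _ _
    · exact xword_occursAt_abPow_append_abPow_succ (by omega) _ _

theorem not_isStrongCode_of_ne {D : Set (List AB)} {x : ℤ → AB} {c c' : ℤ → List AB}
    {k k' : ℕ} (h : IsBiFactorization D x c k) (h' : IsBiFactorization D x c' k')
    (hne : c ≠ c' ∨ k ≠ k') : ¬ IsStrongCode D := fun hD => by
  obtain ⟨hc, hk⟩ := hD x c c' k k' h h'
  exact hne.elim (· hc) (· hk)

/-- `C = {ab} ∪ {a bⁿ a bⁿ⁺¹ : n ≥ 1}` is not a strong code: the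
sequence `⋯(ab)(ab)·(ab²)(ab³)(ab⁴)⋯` admits two distinct factorizations. -/
theorem stmt2 :
    (∃ (c c' : ℤ → List AB) (k k' : ℕ),
      IsBiFactorization C xword c k ∧ IsBiFactorization C xword c' k' ∧
      (c ≠ c' ∨ k ≠ k')) ∧
    ¬ IsStrongCode C := by
  have h₁ := isBiFactorization_blocks (r := 1) (Or.inl rfl)
  have h₂ := isBiFactorization_blocks (r := 2) (Or.inr rfl)
  have hne : 3 - tri 1 ≠ 3 - tri 2 := by decide
  exact ⟨⟨_, _, _, _, h₁, h₂, Or.inr hne⟩, not_isStrongCode_of_ne h₁ h₂ (Or.inr hne)⟩
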